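/- Let (X, ≤) be a strict totally ordered set and define a ternary betweenness relation B(a, b, c) on X by: B(a,b,c) holds iff a < b < c or c < b < a. Suppose a set X carries a ternary relation B satisfying: (i) B(a,b,c) ⟺ B(c,b,a) (symmetry); (ii) for distinct a,b,c, exactly one of B(b,a,c), B(a,b,c), B(a,c,b) holds (trichotomy); and (iii) for distinct a,b,c,d, if B(b,a,c) holds and B(b,a,d) fails then B(c,a,d) holds (transitivity). Then there exists a strict total order < on X, unique up to reversal, such that B(a,b,c) ⟺ (a < b < c or c < b < a) for all distinct a,b,c ∈ X. -/

import Mathlib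

set_option linter.unusedSectionVars false

namespace Stmt14Aux

variable {X : Type}

open Classical in
noncomputable def rnk (B : X → X → X → Prop) (p q x : X) : ℕ :=
  if x = p then 1 else if x = q then 3 else if B x p q then 0 else if B p x q then 2 else 4

def myLt (B : X → X → X → Prop) (p q x y : X) : Prop :=
  x ≠ y ∧ (rnk B p q x < rnk B p q y ∨
    (rnk B p q x = rnk B p q y ∧
      ((rnk B p q x = 0 ∧ B x y p) ∨ (rnk B p q x = 2 ∧ B x y q) ∨
        (rnk B p q x = 4 ∧ B q x y))))

section Basic

variable {B : X → X → X → Prop}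
variable (hsymm : ∀ a b c : X, B a b c ↔ B c b a)
variable (htri : ∀ a b c : X, a ≠ b → a ≠ c → b ≠ c →
      ((B b a c ∧ ¬ B a b c ∧ ¬ B a c b) ∨
       (¬ B b a c ∧ B a b c ∧ ¬ B a c b) ∨
       (¬ B b a c ∧ ¬ B a b c ∧ B a c b)))
variable (htrans : ∀ a b c d : X, a ≠ b → a ≠ c → a ≠ d → b ≠ c → b ≠ d → c ≠ d →
      B b a c → ¬ B b a d → B c a d)

include hsymm htri htrans

/-- if `B a b c` then the other two trichotomy options fail -/
lemma uniq {a b c : X} (hab : a ≠ b) (hac : a ≠ c) (hbc : b ≠ c) (h : B a b c) :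
    ¬ B b a c ∧ ¬ B a c b := by
  rcases htri a b c hab hac hbc with ⟨h1,h2,h3⟩|⟨h1,h2,h3⟩|⟨h1,h2,h3⟩ <;> tauto

lemma atLeast {a b c : X} (hab : a ≠ b) (hac : a ≠ c) (hbc : b ≠ c) :
    B b a c ∨ B a b c ∨ B a c b := by
  rcases htri a b c hab hac hbc with ⟨h1,h2,h3⟩|⟨h1,h2,h3⟩|⟨h1,h2,h3⟩ <;> tauto

/-- "same side of a" is transitive -/
lemma sameTrans {a u v w : X} (hau : a ≠ u) (hav : a ≠ v) (haw : a ≠ w)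
    (huv : u ≠ v) (huw : u ≠ w) (hvw : v ≠ w)
    (h1 : ¬ B u a v) (h2 : ¬ B v a w) : ¬ B u a w := by
  intro h3
  exact h2 ((hsymm v a w).mpr (htrans a u w v hau haw hav huw huv (Ne.symm hvw) h3 h1))

/-- no three points pairwise opposite about a -/
lemma opp3 {a x y z : X} (hax : a ≠ x) (hay : a ≠ y) (haz : a ≠ z)
    (hxy : x ≠ y) (hxz : x ≠ z) (hyz : y ≠ z)
    (h1 : B x a y) (h2 : B x a z) (h3 : B y a z) : False := by
  have n1 := uniq hsymm htri htrans hax.symm hxy hay h1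
  have n2 := uniq hsymm htri htrans hax.symm hxz haz h2
  have n3 := uniq hsymm htri htrans hay.symm hyz haz h3
  rcases atLeast hsymm htri htrans (B := B) hxy hxz hyz with hh | hh | hh
  · have := htrans x y z a hxy hxz hax.symm hyz hay.symm haz.symm hh
      (fun h => n1.1 ((hsymm y x a).mp h))
    exact n2.1 ((hsymm z x a).mp this)
  · have := htrans y x z a hxy.symm hyz hay.symm hxz hax.symm haz.symm hh n1.2
    exact n3.1 ((hsymm z y a).mp this)
  · have := htrans z x y a hxz.symm hyz.symm haz.symm hxy hax.symm hay.symm hh n2.2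
    exact n3.2 this

/-- L1: common outer point x : B x y z, B x z w gives chain x y z w -/
lemma L1 {x y z w : X} (hxy : x ≠ y) (hxz : x ≠ z) (hxw : x ≠ w)
    (hyz : y ≠ z) (hyw : y ≠ w) (hzw : z ≠ w)
    (h1 : B x y z) (h2 : B x z w) : B y z w ∧ B x y w := by
  have u1 := uniq hsymm htri htrans hxy hxz hyz h1
  have h3 : B y z w := by
    have := htrans z x w y hxz.symm hzw hyz.symm hxw hxy hyw.symm h2 u1.2
    exact (hsymm w z y).mp this
  have u2 := uniq hsymm htri htrans hyz hyw hzw h3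
  have h4 : B x y w := htrans y z x w hyz hxy.symm hyw hxz.symm hzw hxw
    ((hsymm x y z).mp h1) u2.1
  exact ⟨h3, h4⟩

/-- L2: chained: B x y z, B y z w gives chain x y z w -/
lemma L2 {x y z w : X} (hxy : x ≠ y) (hxz : x ≠ z) (hxw : x ≠ w)
    (hyz : y ≠ z) (hyw : y ≠ w) (hzw : z ≠ w)
    (h1 : B x y z) (h2 : B y z w) : B x z w ∧ B x y w := by
  have u1 := uniq hsymm htri htrans hxy hxz hyz h1
  have h3 : B x z w := by
    have := htrans z y w x hyz.symm hzw hxz.symm hyw hxy.symm hxw.symm h2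
      (fun h => u1.2 ((hsymm y z x).mp h))
    exact (hsymm w z x).mp this
  exact ⟨h3, (L1 hsymm htri htrans hxy hxz hxw hyz hyw hzw h1 h3).2⟩

/-- x left of p, y in middle: B x p y -/
lemma G7 {p q x y : X} (hpq : p ≠ q) (hxp : x ≠ p) (hxq : x ≠ q)
    (hyp : y ≠ p) (hyq : y ≠ q) (hxy : x ≠ y)
    (hx : B x p q) (hy : B p y q) : B x p y := by
  have uy := uniq hsymm htri htrans hyp.symm hpq hyq hy
  exact htrans p q x y hpq hxp.symm hyp.symm hxq.symm hyq.symm hxy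
    ((hsymm x p q).mp hx) (fun h => uy.1 ((hsymm q p y).mp h))

/-- x left of p, z right of q: B x p z -/
lemma G9 {p q x z : X} (hpq : p ≠ q) (hxp : x ≠ p) (hxq : x ≠ q)
    (hzp : z ≠ p) (hzq : z ≠ q) (hxz : x ≠ z)
    (hx : B x p q) (hz : B p q z) : B x p z := by
  have uz := uniq hsymm htri htrans hpq (Ne.symm hzp) (Ne.symm hzq) hz
  exact htrans p q x z hpq hxp.symm hzp.symm hxq.symm hzq.symm hxz
    ((hsymm x p q).mp hx) uz.1

/-- y in middle, z right of q: B y q z -/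
lemma G8 {p q y z : X} (hpq : p ≠ q) (hyp : y ≠ p) (hyq : y ≠ q)
    (hzp : z ≠ p) (hzq : z ≠ q) (hyz : y ≠ z)
    (hy : B p y q) (hz : B p q z) : B y q z := by
  have uy := uniq hsymm htri htrans hyp.symm hpq hyq hy
  have := htrans q p z y hpq.symm hzq.symm hyq.symm hzp.symm hyp.symm hyz.symm hz uy.2
  exact (hsymm z q y).mp this

/-- x left of p, z right of q: B x q z -/
lemma G9' {p q x z : X} (hpq : p ≠ q) (hxp : x ≠ p) (hxq : x ≠ q)
    (hzp : z ≠ p) (hzq : z ≠ q) (hxz : x ≠ z)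
    (hx : B x p q) (hz : B p q z) : B x q z :=
  (L2 hsymm htri htrans hxp hxq hxz hpq hzp.symm hzq.symm hx hz).1

/-- y, y' in middle with B y y' q : B p y y' -/
lemma G5' {p q y y' : X} (hpq : p ≠ q) (hyp : y ≠ p) (hyq : y ≠ q)
    (hy'p : y' ≠ p) (hy'q : y' ≠ q) (hyy' : y ≠ y')
    (h1 : B p y q) (h2 : B y y' q) : B p y y' := by
  have u2 := uniq hsymm htri htrans hyy' hyq hy'q h2
  exact htrans y q p y' hyq hyp hyy' hpq.symm hy'q.symm hy'p.symm
    ((hsymm p y q).mp h1) (fun h => u2.1 ((hsymm q y y').mp h))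

end Basic
section Rnk

variable (B : X → X → X → Prop) (p q : X)

lemma rnk_p : rnk B p q p = 1 := by simp [rnk]

lemma rnk_q (hpq : p ≠ q) : rnk B p q q = 3 := by simp [rnk, Ne.symm hpq]

lemma rnk_mem (x : X) : rnk B p q x = 0 ∨ rnk B p q x = 1 ∨ rnk B p q x = 2 ∨
    rnk B p q x = 3 ∨ rnk B p q x = 4 := by
  unfold rnk; split_ifs <;> omega

lemma rnk0 {x : X} (h : rnk B p q x = 0) : x ≠ p ∧ x ≠ q ∧ B x p q := by
  unfold rnk at h; split_ifs at h with h1 h2 h3 h4 <;> first | omega | exact ⟨h1, h2, h3⟩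

lemma rnk1 {x : X} (h : rnk B p q x = 1) : x = p := by
  unfold rnk at h; split_ifs at h with h1 h2 h3 h4 <;> first | omega | exact h1

lemma rnk2 {x : X} (h : rnk B p q x = 2) : x ≠ p ∧ x ≠ q ∧ B p x q ∧ ¬ B x p q := by
  unfold rnk at h; split_ifs at h with h1 h2 h3 h4 <;> first | omega | exact ⟨h1, h2, h4, h3⟩

lemma rnk3 {x : X} (h : rnk B p q x = 3) : x = q := by
  unfold rnk at h; split_ifs at h with h1 h2 h3 h4 <;> first | omega | exact h2

lemma rnk4 {x : X} (h : rnk B p q x = 4) :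
    x ≠ p ∧ x ≠ q ∧ ¬ B x p q ∧ ¬ B p x q := by
  unfold rnk at h; split_ifs at h with h1 h2 h3 h4 <;> first | omega | exact ⟨h1, h2, h3, h4⟩

end Rnk

section Rnk2

variable {B : X → X → X → Prop}
variable (hsymm : ∀ a b c : X, B a b c ↔ B c b a)
variable (htri : ∀ a b c : X, a ≠ b → a ≠ c → b ≠ c →
      ((B b a c ∧ ¬ B a b c ∧ ¬ B a c b) ∨
       (¬ B b a c ∧ B a b c ∧ ¬ B a c b) ∨
       (¬ B b a c ∧ ¬ B a b c ∧ B a c b)))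
variable (htrans : ∀ a b c d : X, a ≠ b → a ≠ c → a ≠ d → b ≠ c → b ≠ d → c ≠ d →
      B b a c → ¬ B b a d → B c a d)

include hsymm htri htrans

lemma rnk4' {p q x : X} (hpq : p ≠ q) (h : rnk B p q x = 4) :
    x ≠ p ∧ x ≠ q ∧ B p q x := by
  obtain ⟨h1, h2, h3, h4⟩ := rnk4 B p q h
  refine ⟨h1, h2, ?_⟩
  rcases atLeast hsymm htri htrans (B := B) (Ne.symm h1) hpq h2 with hh | hh | hh
  · exact absurd hh h3
  · exact absurd hh h4
  · exact hh

end Rnk2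
section Key

variable {B : X → X → X → Prop}
variable (hsymm : ∀ a b c : X, B a b c ↔ B c b a)
variable (htri : ∀ a b c : X, a ≠ b → a ≠ c → b ≠ c →
      ((B b a c ∧ ¬ B a b c ∧ ¬ B a c b) ∨
       (¬ B b a c ∧ B a b c ∧ ¬ B a c b) ∨
       (¬ B b a c ∧ ¬ B a b c ∧ B a c b)))
variable (htrans : ∀ a b c d : X, a ≠ b → a ≠ c → a ≠ d → b ≠ c → b ≠ d → c ≠ d →
      B b a c → ¬ B b a d → B c a d)

include hsymm htri htrans

lemma key {p q : X} (hpq : p ≠ q) {a b c : X} (hab : a ≠ b) (hac : a ≠ c) (hbc : b ≠ c)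
    (h1 : myLt B p q a b) (h2 : myLt B p q b c) : B a b c := by
  simp only [myLt] at h1 h2
  replace h1 := h1.2
  replace h2 := h2.2
  rcases rnk_mem B p q a with ha|ha|ha|ha|ha <;>
    rcases rnk_mem B p q b with hb|hb|hb|hb|hb <;>
      rcases rnk_mem B p q c with hc|hc|hc|hc|hc <;>
        rw [ha, hb] at h1 <;> rw [hb, hc] at h2 <;> (try norm_num at h1) <;> (try norm_num at h2)
  · obtain ⟨hap, haq, hA⟩ := rnk0 B p q ha
    obtain ⟨hbp, hbq, hB⟩ := rnk0 B p q hb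
    obtain ⟨hcp, hcq, hC⟩ := rnk0 B p q hc
    have := (L1 hsymm htri htrans (Ne.symm hcp) (Ne.symm hbp) (Ne.symm hap) hbc.symm hac.symm hab.symm
      ((hsymm b c p).mp h2) ((hsymm a b p).mp h1)).1
    exact (hsymm c b a).mp this
  · obtain rfl := (rnk1 B p q hc).symm
    exact h1
  · obtain ⟨hap, haq, hA⟩ := rnk0 B p q ha
    obtain ⟨hbp, hbq, hB⟩ := rnk0 B p q hb
    obtain ⟨hcp, hcq, hC, -⟩ := rnk2 B p q hc
    have hbpc : B b p c := G7 hsymm htri htrans hpq hbp hbq hcp hcq hbc hB hC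
    exact (L2 hsymm htri htrans hab hap hac hbp hbc (Ne.symm hcp) h1 hbpc).2
  · obtain rfl := (rnk3 B p q hc).symm
    obtain ⟨hap, haq, hA⟩ := rnk0 B p q ha
    obtain ⟨hbp, hbq, hB⟩ := rnk0 B p q hb
    exact (L2 hsymm htri htrans hab hap haq hbp hbq hpq h1 hB).2
  · obtain ⟨hap, haq, hA⟩ := rnk0 B p q ha
    obtain ⟨hbp, hbq, hB⟩ := rnk0 B p q hb
    obtain ⟨hcp, hcq, hC⟩ := rnk4' hsymm htri htrans hpq hc
    have hbpc : B b p c := G9 hsymm htri htrans hpq hbp hbq hcp hcq hbc hB hC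
    exact (L2 hsymm htri htrans hab hap hac hbp hbc (Ne.symm hcp) h1 hbpc).2
  · obtain rfl := (rnk1 B p q hb).symm
    obtain ⟨hap, haq, hA⟩ := rnk0 B p q ha
    obtain ⟨hcp, hcq, hC, -⟩ := rnk2 B p q hc
    exact G7 hsymm htri htrans hpq hap haq hcp hcq hac hA hC
  · obtain rfl := (rnk1 B p q hb).symm
    obtain rfl := (rnk3 B p q hc).symm
    exact (rnk0 B p q ha).2.2
  · obtain rfl := (rnk1 B p q hb).symm
    obtain ⟨hap, haq, hA⟩ := rnk0 B p q ha
    obtain ⟨hcp, hcq, hC⟩ := rnk4' hsymm htri htrans hpq hc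
    exact G9 hsymm htri htrans hpq hap haq hcp hcq hac hA hC
  · obtain ⟨hap, haq, hA⟩ := rnk0 B p q ha
    obtain ⟨hbp, hbq, hB, -⟩ := rnk2 B p q hb
    obtain ⟨hcp, hcq, hC, -⟩ := rnk2 B p q hc
    have h3 : B a p b := G7 hsymm htri htrans hpq hap haq hbp hbq hab hA hB
    have h4 : B p b c := G5' hsymm htri htrans hpq hbp hbq hcp hcq hbc hB h2
    exact (L2 hsymm htri htrans hap hab hac (Ne.symm hbp) (Ne.symm hcp) hbc h3 h4).1
  · obtain rfl := (rnk3 B p q hc).symm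
    obtain ⟨hap, haq, hA⟩ := rnk0 B p q ha
    obtain ⟨hbp, hbq, hB, -⟩ := rnk2 B p q hb
    have h3 : B a p b := G7 hsymm htri htrans hpq hap haq hbp hbq hab hA hB
    exact (L2 hsymm htri htrans hap hab haq (Ne.symm hbp) hpq hbq h3 hB).1
  · obtain ⟨hap, haq, hA⟩ := rnk0 B p q ha
    obtain ⟨hbp, hbq, hB, -⟩ := rnk2 B p q hb
    obtain ⟨hcp, hcq, hC⟩ := rnk4' hsymm htri htrans hpq hc
    have h3 : B a p b := G7 hsymm htri htrans hpq hap haq hbp hbq hab hA hB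
    have h4 : B a b q := (L2 hsymm htri htrans hap hab haq (Ne.symm hbp) hpq hbq h3 hB).1
    have h5 : B b q c := G8 hsymm htri htrans hpq hbp hbq hcp hcq hbc hB hC
    exact (L2 hsymm htri htrans hab haq hac hbq hbc (Ne.symm hcq) h4 h5).2
  · obtain rfl := (rnk3 B p q hb).symm
    obtain ⟨hap, haq, hA⟩ := rnk0 B p q ha
    obtain ⟨hcp, hcq, hC⟩ := rnk4' hsymm htri htrans hpq hc
    exact G9' hsymm htri htrans hpq hap haq hcp hcq hac hA hC
  · obtain ⟨hap, haq, hA⟩ := rnk0 B p q ha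
    obtain ⟨hbp, hbq, hB⟩ := rnk4' hsymm htri htrans hpq hb
    obtain ⟨hcp, hcq, hC⟩ := rnk4' hsymm htri htrans hpq hc
    have h3 : B a q b := G9' hsymm htri htrans hpq hap haq hbp hbq hab hA hB
    exact (L2 hsymm htri htrans haq hab hac (Ne.symm hbq) (Ne.symm hcq) hbc h3 h2).1
  · obtain rfl := (rnk1 B p q ha).symm
    obtain ⟨hbp, hbq, hB, -⟩ := rnk2 B p q hb
    obtain ⟨hcp, hcq, hC, -⟩ := rnk2 B p q hc
    exact G5' hsymm htri htrans hpq hbp hbq hcp hcq hbc hB h2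
  · obtain rfl := (rnk1 B p q ha).symm
    obtain rfl := (rnk3 B p q hc).symm
    exact (rnk2 B p q hb).2.2.1
  · obtain rfl := (rnk1 B p q ha).symm
    obtain ⟨hbp, hbq, hB, -⟩ := rnk2 B p q hb
    obtain ⟨hcp, hcq, hC⟩ := rnk4' hsymm htri htrans hpq hc
    have h5 : B b q c := G8 hsymm htri htrans hpq hbp hbq hcp hcq hbc hB hC
    exact (L2 hsymm htri htrans (Ne.symm hbp) hpq (Ne.symm hcp) hbq hbc (Ne.symm hcq) hB h5).2
  · obtain rfl := (rnk1 B p q ha).symm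
    obtain rfl := (rnk3 B p q hb).symm
    exact (rnk4' hsymm htri htrans hpq hc).2.2
  · obtain rfl := (rnk1 B p q ha).symm
    obtain ⟨hbp, hbq, hB⟩ := rnk4' hsymm htri htrans hpq hb
    obtain ⟨hcp, hcq, hC⟩ := rnk4' hsymm htri htrans hpq hc
    exact (L2 hsymm htri htrans hpq (Ne.symm hbp) (Ne.symm hcp) (Ne.symm hbq) (Ne.symm hcq) hbc hB h2).1
  · obtain ⟨hap, haq, hA, -⟩ := rnk2 B p q ha
    obtain ⟨hbp, hbq, hB, -⟩ := rnk2 B p q hb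
    obtain ⟨hcp, hcq, hC, -⟩ := rnk2 B p q hc
    have := (L1 hsymm htri htrans (Ne.symm hcq) (Ne.symm hbq) (Ne.symm haq) hbc.symm hac.symm hab.symm
      ((hsymm b c q).mp h2) ((hsymm a b q).mp h1)).1
    exact (hsymm c b a).mp this
  · obtain rfl := (rnk3 B p q hc).symm
    exact h1
  · obtain ⟨hap, haq, hA, -⟩ := rnk2 B p q ha
    obtain ⟨hbp, hbq, hB, -⟩ := rnk2 B p q hb
    obtain ⟨hcp, hcq, hC⟩ := rnk4' hsymm htri htrans hpq hc
    have h5 : B b q c := G8 hsymm htri htrans hpq hbp hbq hcp hcq hbc hB hC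
    exact (L2 hsymm htri htrans hab haq hac hbq hbc (Ne.symm hcq) h1 h5).2
  · obtain rfl := (rnk3 B p q hb).symm
    obtain ⟨hap, haq, hA, -⟩ := rnk2 B p q ha
    obtain ⟨hcp, hcq, hC⟩ := rnk4' hsymm htri htrans hpq hc
    exact G8 hsymm htri htrans hpq hap haq hcp hcq hac hA hC
  · obtain ⟨hap, haq, hA, -⟩ := rnk2 B p q ha
    obtain ⟨hbp, hbq, hB⟩ := rnk4' hsymm htri htrans hpq hb
    obtain ⟨hcp, hcq, hC⟩ := rnk4' hsymm htri htrans hpq hc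
    have h3 : B a q b := G8 hsymm htri htrans hpq hap haq hbp hbq hab hA hB
    exact (L2 hsymm htri htrans haq hab hac (Ne.symm hbq) (Ne.symm hcq) hbc h3 h2).1
  · obtain rfl := (rnk3 B p q ha).symm
    exact h2
  · obtain ⟨hap, haq, hA⟩ := rnk4' hsymm htri htrans hpq ha
    obtain ⟨hbp, hbq, hB⟩ := rnk4' hsymm htri htrans hpq hb
    obtain ⟨hcp, hcq, hC⟩ := rnk4' hsymm htri htrans hpq hc
    exact (L1 hsymm htri htrans (Ne.symm haq) (Ne.symm hbq) (Ne.symm hcq) hab hac hbc h1 h2).1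

lemma myLt_asymm {p q x y : X} (h : myLt B p q x y) (h' : myLt B p q y x) : False := by
  obtain ⟨hxy, h⟩ := h
  obtain ⟨-, h'⟩ := h'
  rcases h with h | ⟨he, h⟩ <;> rcases h' with h' | ⟨he', h'⟩
  · omega
  · omega
  · omega
  · rcases h with ⟨e, hB⟩|⟨e, hB⟩|⟨e, hB⟩ <;> rcases h' with ⟨e', hB'⟩|⟨e', hB'⟩|⟨e', hB'⟩ <;>
      try omega
    · obtain ⟨hxp, hxq, -⟩ := rnk0 B p q e
      obtain ⟨hyp, hyq, -⟩ := rnk0 B p q e'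
      exact (uniq hsymm htri htrans hxy hxp hyp hB).1 hB'
    · obtain ⟨hxp, hxq, -⟩ := rnk2 B p q e
      obtain ⟨hyp, hyq, -⟩ := rnk2 B p q e'
      exact (uniq hsymm htri htrans hxy hxq hyq hB).1 hB'
    · obtain ⟨hxp, hxq, -⟩ := rnk4 B p q e
      obtain ⟨hyp, hyq, -⟩ := rnk4 B p q e'
      exact (uniq hsymm htri htrans (Ne.symm hxq) (Ne.symm hyq) hxy hB).2 hB'

lemma myLt_tri {p q : X} (hpq : p ≠ q) (x y : X) :
    myLt B p q x y ∨ x = y ∨ myLt B p q y x := by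
  by_cases hxy : x = y
  · exact Or.inr (Or.inl hxy)
  have he' : rnk B p q x < rnk B p q y ∨ rnk B p q x = rnk B p q y ∨
      rnk B p q y < rnk B p q x := by omega
  rcases he' with he | he | he
  · exact Or.inl ⟨hxy, Or.inl he⟩
  · rcases rnk_mem B p q x with hx | hx | hx | hx | hx
    · obtain ⟨hxp, hxq, hX⟩ := rnk0 B p q hx
      obtain ⟨hyp, hyq, hY⟩ := rnk0 B p q (he ▸ hx)
      have nmid : ¬ B x p y := fun hmid => opp3 hsymm htri htrans hpq (Ne.symm hxp) (Ne.symm hyp)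
        (Ne.symm hxq) (Ne.symm hyq) hxy ((hsymm x p q).mp hX) ((hsymm y p q).mp hY) hmid
      rcases atLeast hsymm htri htrans (B := B) hxy hxp hyp with hh | hh | hh
      · exact Or.inr (Or.inr ⟨Ne.symm hxy, Or.inr ⟨he.symm, Or.inl ⟨he ▸ hx, hh⟩⟩⟩)
      · exact Or.inl ⟨hxy, Or.inr ⟨he, Or.inl ⟨hx, hh⟩⟩⟩
      · exact absurd hh nmid
    · exact absurd ((rnk1 B p q hx).trans (rnk1 B p q (he ▸ hx)).symm) hxy
    · obtain ⟨hxp, hxq, hX, -⟩ := rnk2 B p q hx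
      obtain ⟨hyp, hyq, hY, -⟩ := rnk2 B p q (he ▸ hx)
      have nX : ¬ B p q x := (uniq hsymm htri htrans hxp.symm hpq hxq hX).2
      have nY : ¬ B p q y := (uniq hsymm htri htrans hyp.symm hpq hyq hY).2
      have nmid : ¬ B x q y := sameTrans hsymm htri htrans hxq.symm hpq.symm hyq.symm hxp hxy
        (Ne.symm hyp) (fun hh => nX ((hsymm p q x).mpr hh)) nY
      rcases atLeast hsymm htri htrans (B := B) hxy hxq hyq with hh | hh | hh
      · exact Or.inr (Or.inr ⟨Ne.symm hxy, Or.inr ⟨he.symm, Or.inr (Or.inl ⟨he ▸ hx, hh⟩)⟩⟩)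
      · exact Or.inl ⟨hxy, Or.inr ⟨he, Or.inr (Or.inl ⟨hx, hh⟩)⟩⟩
      · exact absurd hh nmid
    · exact absurd ((rnk3 B p q hx).trans (rnk3 B p q (he ▸ hx)).symm) hxy
    · obtain ⟨hxp, hxq, hX⟩ := rnk4' hsymm htri htrans hpq hx
      obtain ⟨hyp, hyq, hY⟩ := rnk4' hsymm htri htrans hpq (he ▸ hx)
      have nmid : ¬ B x q y := fun hmid => opp3 hsymm htri htrans hpq.symm (Ne.symm hxq) (Ne.symm hyq)
        (Ne.symm hxp) (Ne.symm hyp) hxy hX hY hmid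
      rcases atLeast hsymm htri htrans (B := B) (Ne.symm hxq) (Ne.symm hyq) hxy with hh | hh | hh
      · exact absurd hh nmid
      · exact Or.inl ⟨hxy, Or.inr ⟨he, Or.inr (Or.inr ⟨hx, hh⟩)⟩⟩
      · exact Or.inr (Or.inr ⟨Ne.symm hxy, Or.inr ⟨he.symm, Or.inr (Or.inr ⟨he ▸ hx, hh⟩)⟩⟩)
  · exact Or.inr (Or.inr ⟨Ne.symm hxy, Or.inl he⟩)

lemma myLt_trans {p q : X} (hpq : p ≠ q) {x y z : X}
    (h1 : myLt B p q x y) (h2 : myLt B p q y z) : myLt B p q x z := by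
  have hxy := h1.1
  have hyz := h2.1
  by_cases hxz : x = z
  · subst hxz
    exact absurd h2 (fun hh => myLt_asymm hsymm htri htrans h1 hh)
  rcases myLt_tri hsymm htri htrans hpq x z with h3 | h3 | h3
  · exact h3
  · exact absurd h3 hxz
  · have bZXY : B z x y := key hsymm htri htrans hpq (Ne.symm hxz) (Ne.symm hyz) hxy h3 h1
    have bXYZ : B x y z := key hsymm htri htrans hpq hxy hxz hyz h1 h2
    exact absurd ((hsymm z x y).mp bZXY) (uniq hsymm htri htrans hxy hxz hyz bXYZ).1

lemma correct {p q : X} (hpq : p ≠ q) {a b c : X} (hab : a ≠ b) (hac : a ≠ c)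
    (hbc : b ≠ c) :
    B a b c ↔ ((myLt B p q a b ∧ myLt B p q b c) ∨ (myLt B p q c b ∧ myLt B p q b a)) := by
  constructor
  · intro h
    rcases myLt_tri hsymm htri htrans hpq a b with h1 | h1 | h1
    · rcases myLt_tri hsymm htri htrans hpq b c with h2 | h2 | h2
      · exact Or.inl ⟨h1, h2⟩
      · exact absurd h2 hbc
      · rcases myLt_tri hsymm htri htrans hpq a c with h3 | h3 | h3
        · exact absurd (key hsymm htri htrans hpq hac hab hbc.symm h3 h2) (uniq hsymm htri htrans hab hac hbc h).2
        · exact absurd h3 hac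
        · exact absurd ((hsymm c a b).mp (key hsymm htri htrans hpq hac.symm hbc.symm hab h3 h1))
            (uniq hsymm htri htrans hab hac hbc h).1
    · exact absurd h1 hab
    · rcases myLt_tri hsymm htri htrans hpq b c with h2 | h2 | h2
      · rcases myLt_tri hsymm htri htrans hpq a c with h3 | h3 | h3
        · exact absurd (key hsymm htri htrans hpq hab.symm hbc hac h1 h3) (uniq hsymm htri htrans hab hac hbc h).1
        · exact absurd h3 hac
        · exact absurd ((hsymm b c a).mp (key hsymm htri htrans hpq hbc hab.symm hac.symm h2 h3))
            (uniq hsymm htri htrans hab hac hbc h).2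
      · exact absurd h2 hbc
      · exact Or.inr ⟨h2, h1⟩
  · rintro (⟨h1, h2⟩ | ⟨h1, h2⟩)
    · exact key hsymm htri htrans hpq hab hac hbc h1 h2
    · exact (hsymm c b a).mp (key hsymm htri htrans hpq hbc.symm hac.symm hab.symm h1 h2)

lemma agree {p q : X} (hpq : p ≠ q) (lt'' : X → X → Prop)
    (irr : ∀ a, ¬ lt'' a a) (tr : ∀ a b c, lt'' a b → lt'' b c → lt'' a c)
    (hreal : ∀ a b c : X, a ≠ b → a ≠ c → b ≠ c →
      (B a b c ↔ ((lt'' a b ∧ lt'' b c) ∨ (lt'' c b ∧ lt'' b a))))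
    (hor : lt'' p q) : ∀ x y : X, myLt B p q x y → lt'' x y := by
  have asym : ∀ a b, lt'' a b → lt'' b a → False := fun a b h h' => irr a (tr a b a h h')
  have fL : ∀ x : X, rnk B p q x = 0 → lt'' x p ∧ lt'' x q := by
    intro x hx
    obtain ⟨hxp, hxq, hX⟩ := rnk0 B p q hx
    rcases (hreal x p q hxp hxq hpq).mp hX with ⟨u1, u2⟩ | ⟨u1, u2⟩
    · exact ⟨u1, tr _ _ _ u1 hor⟩
    · exact absurd u1 (fun hh => asym p q hor hh)
  have fM : ∀ x : X, rnk B p q x = 2 → lt'' p x ∧ lt'' x q := by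
    intro x hx
    obtain ⟨hxp, hxq, hX, -⟩ := rnk2 B p q hx
    rcases (hreal p x q hxp.symm hpq hxq).mp hX with ⟨u1, u2⟩ | ⟨u1, u2⟩
    · exact ⟨u1, u2⟩
    · exact absurd (tr _ _ _ u1 u2) (fun hh => asym p q hor hh)
  have fR : ∀ x : X, rnk B p q x = 4 → lt'' p x ∧ lt'' q x := by
    intro x hx
    obtain ⟨hxp, hxq, hX⟩ := rnk4' hsymm htri htrans hpq hx
    rcases (hreal p q x hpq hxp.symm hxq.symm).mp hX with ⟨u1, u2⟩ | ⟨u1, u2⟩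
    · exact ⟨tr _ _ _ hor u2, u2⟩
    · exact absurd u2 (fun hh => asym p q hor hh)
  rintro x y ⟨hxy, hlt | ⟨he, hin⟩⟩
  · rcases rnk_mem B p q x with hx | hx | hx | hx | hx <;>
      rcases rnk_mem B p q y with hy | hy | hy | hy | hy <;>
        rw [hx, hy] at hlt <;> try omega
    · obtain rfl := (rnk1 B p q hy).symm
      exact (fL x hx).1
    · exact tr _ _ _ (fL x hx).1 (fM y hy).1
    · obtain rfl := (rnk3 B p q hy).symm
      exact (fL x hx).2
    · exact tr _ _ _ (fL x hx).2 (fR y hy).2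
    · obtain rfl := (rnk1 B p q hx).symm
      exact (fM y hy).1
    · obtain rfl := (rnk1 B p q hx).symm
      obtain rfl := (rnk3 B p q hy).symm
      exact hor
    · obtain rfl := (rnk1 B p q hx).symm
      exact (fR y hy).1
    · obtain rfl := (rnk3 B p q hy).symm
      exact (fM x hx).2
    · exact tr _ _ _ (fM x hx).2 (fR y hy).2
    · obtain rfl := (rnk3 B p q hx).symm
      exact (fR y hy).2
  · rcases hin with ⟨e, hB⟩ | ⟨e, hB⟩ | ⟨e, hB⟩
    · obtain ⟨hxp, hxq, -⟩ := rnk0 B p q e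
      obtain ⟨hyp, hyq, -⟩ := rnk0 B p q (he ▸ e)
      rcases (hreal x y p hxy hxp hyp).mp hB with ⟨u1, u2⟩ | ⟨u1, u2⟩
      · exact u1
      · exact absurd u1 (fun hh => asym y p (fL y (he ▸ e)).1 hh)
    · obtain ⟨hxp, hxq, -⟩ := rnk2 B p q e
      obtain ⟨hyp, hyq, -⟩ := rnk2 B p q (he ▸ e)
      rcases (hreal x y q hxy hxq hyq).mp hB with ⟨u1, u2⟩ | ⟨u1, u2⟩
      · exact u1
      · exact absurd u1 (fun hh => asym y q (fM y (he ▸ e)).2 hh)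
    · obtain ⟨hxp, hxq, -⟩ := rnk4 B p q e
      obtain ⟨hyp, hyq, -⟩ := rnk4 B p q (he ▸ e)
      rcases (hreal q x y (Ne.symm hxq) (Ne.symm hyq) hxy).mp hB with ⟨u1, u2⟩ | ⟨u1, u2⟩
      · exact u2
      · exact absurd u2 (fun hh => asym q x (fR x e).2 hh)

end Key
end Stmt14Aux

open Stmt14Aux

theorem stmt14 {X : Type} (B : X → X → X → Prop)
    (hsymm : ∀ a b c : X, B a b c ↔ B c b a)
    (htri : ∀ a b c : X, a ≠ b → a ≠ c → b ≠ c →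
      ((B b a c ∧ ¬ B a b c ∧ ¬ B a c b) ∨
       (¬ B b a c ∧ B a b c ∧ ¬ B a c b) ∨
       (¬ B b a c ∧ ¬ B a b c ∧ B a c b)))
    (htrans : ∀ a b c d : X, a ≠ b → a ≠ c → a ≠ d → b ≠ c → b ≠ d → c ≠ d →
      B b a c → ¬ B b a d → B c a d) :
    ∃ lt : X → X → Prop, IsStrictTotalOrder X lt ∧
      (∀ a b c : X, a ≠ b → a ≠ c → b ≠ c →
        (B a b c ↔ ((lt a b ∧ lt b c) ∨ (lt c b ∧ lt b a)))) ∧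
      (∀ lt' : X → X → Prop, IsStrictTotalOrder X lt' →
        (∀ a b c : X, a ≠ b → a ≠ c → b ≠ c →
          (B a b c ↔ ((lt' a b ∧ lt' b c) ∨ (lt' c b ∧ lt' b a)))) →
        ((∀ a b : X, lt' a b ↔ lt a b) ∨ (∀ a b : X, lt' a b ↔ lt b a))) := by
  classical
  by_cases hex : ∃ p q : X, p ≠ q
  · obtain ⟨p, q, hpq⟩ := hex
    refine ⟨myLt B p q, ?_, ?_, ?_⟩
    · exact { trichotomous := fun a b n1 n2 => by
                rcases myLt_tri hsymm htri htrans hpq a b with h | h | h <;> tauto,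
              irrefl := fun a h => h.1 rfl,
              trans := fun a b c h1 h2 => myLt_trans hsymm htri htrans hpq h1 h2 }
    · intro a b c hab hac hbc
      exact correct hsymm htri htrans hpq hab hac hbc
    · intro lt' hSTO hreal
      have irr : ∀ a, ¬ lt' a a := fun a => hSTO.toIsStrictOrder.toIrrefl.irrefl a
      have tr : ∀ a b c : X, lt' a b → lt' b c → lt' a c :=
        fun a b c => hSTO.toIsStrictOrder.toIsTrans.trans a b c
      have asym : ∀ a b, lt' a b → lt' b a → False :=
        fun a b h h' => irr a (tr a b a h h')
      rcases trichotomous (r := lt') p q with hor | heq | hor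
      · left
        intro a b
        constructor
        · intro h
          rcases myLt_tri hsymm htri htrans hpq a b with h1 | h1 | h1
          · exact h1
          · subst h1; exact absurd h (irr a)
          · exact absurd h (fun hh =>
              asym a b hh (agree hsymm htri htrans hpq lt' irr tr hreal hor b a h1))
        · exact fun h1 => agree hsymm htri htrans hpq lt' irr tr hreal hor a b h1
      · exact absurd heq hpq
      · right
        intro a b
        have irr3 : ∀ a : X, ¬ (fun u v => lt' v u) a a := irr
        have tr3 : ∀ a b c : X, (fun u v => lt' v u) a b → (fun u v => lt' v u) b c →
            (fun u v => lt' v u) a c := fun a b c h1 h2 => tr c b a h2 h1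
        have hreal3 : ∀ a b c : X, a ≠ b → a ≠ c → b ≠ c →
            (B a b c ↔ (((fun u v => lt' v u) a b ∧ (fun u v => lt' v u) b c) ∨
              ((fun u v => lt' v u) c b ∧ (fun u v => lt' v u) b a))) := by
          intro a b c hab hac hbc
          rw [hreal a b c hab hac hbc]
          constructor
          · rintro (⟨u1, u2⟩ | ⟨u1, u2⟩)
            · exact Or.inr ⟨u2, u1⟩
            · exact Or.inl ⟨u2, u1⟩
          · rintro (⟨u1, u2⟩ | ⟨u1, u2⟩)
            · exact Or.inr ⟨u2, u1⟩
            · exact Or.inl ⟨u2, u1⟩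
        have hag := agree hsymm htri htrans hpq (fun u v => lt' v u) irr3 tr3 hreal3 hor
        constructor
        · intro h
          rcases myLt_tri hsymm htri htrans hpq b a with h1 | h1 | h1
          · exact h1
          · subst h1; exact absurd h (irr b)
          · exact absurd h (fun hh => asym a b hh (hag a b h1))
        · exact fun h1 => hag b a h1
  · push_neg at hex
    refine ⟨fun _ _ => False, ?_, ?_, ?_⟩
    · exact { trichotomous := fun a b _ _ => hex a b,
              irrefl := fun a h => h,
              trans := fun a b c h _ => h.elim }
    · intro a b c hab
      exact absurd (hex a b) hab
    · intro lt' hSTO hreal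
      left
      intro a b
      simp only [iff_false]
      intro h
      exact hSTO.toIsStrictOrder.toIrrefl.irrefl b (hex a b ▸ h)
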